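/- Let z* optimize Leader-Opt and let q* be a probability distribution over K-sized subsets of A_{z*} with marginals p_a = 1 − g'_a(z*_a)/θ_{z*}. Then z* maximizes the expected number of successfully stuffed votes against q*, i.e., z* solves max_z ∑_{a∈A_{z*}} (1−p_a) z_a + ∑_{b∈B_{z*}} z_b + ∑_{c∈C_{z*}} z_c subject to ∑_j g_j(z_j) ≤ G, z ≥ 0. Consequently (z*, q*) is a Nash equilibrium of the Ballot Stuffing Game. -/

import Mathlib

/-!
At a maximizer `z` of `sumSmallest`, the coordinates equal to the maximum `M` form the block `A`,
and `#A > K` gives `sumSmallest z = ∑ z - K * M`. Along `z + s • d` the sum grows at rate `∑ d`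
while the `K` largest coordinates grow at rate at most `K * m`, where `m` bounds `d` on `A`; so no
direction that is feasible to first order has `∑ d > K * m`. For `d = 1` this exhausts the budget;
for directions moving mass between `A` and one coordinate `b ∉ A` it gives the KKT conditions
`θ ≤ g'_b(z_b)`, with equality when `z_b > 0`.

Against `q`, coordinate `j` survives with probability `ω_j = 1 - p_j` on `A` and `1` off `A`, and
the KKT conditions read `θ ω_j ≤ g'_j(z_j)` with equality where `z_j > 0`. The tangent-line
inequality for the convex costs then shows that `z` maximizes `∑ ω_j w_j` on the budget set.
Every set in the support of `q` removes `K` coordinates of `A`, which is the best the inspector can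
do against `z`.
-/

open Finset

/-- Sum of the `J - K` smallest coordinates of `z`: the infimum of sums over
`(J-K)`-element subsets of coordinates. -/
noncomputable def sumSmallest (J K : ℕ) (z : Fin J → ℝ) : ℝ :=
  sInf {s : ℝ | ∃ S : Finset (Fin J), S.card = J - K ∧ s = ∑ i ∈ S, z i}

/-- Feasible stuffing vectors: nonnegative, total cost at most `G`. -/
def Feasible (J : ℕ) (g : Fin J → ℝ → ℝ) (G : ℝ) : Set (Fin J → ℝ) :=
  {z | (∀ j, 0 ≤ z j) ∧ ∑ j, g j (z j) ≤ G}

open Filter Topology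

section Perturbation

variable {ι : Type*} [Fintype ι]

lemma tendsto_add_mul_nhds_zero (a c : ℝ) :
    Tendsto (fun s : ℝ => a + s * c) (𝓝 0) (𝓝 a) := by
  simpa using (continuous_const.add (continuous_id.mul continuous_const)).tendsto
    (f := fun s : ℝ => a + s * c) 0

lemma exists_gt_and_mul_lt {u γ θ : ℝ} (h : γ * u < θ * u) :
    ∃ t, u < t ∧ t * γ < θ * u := by
  have : ∀ᶠ t in 𝓝[>] u, t * γ < θ * u :=
    (((continuous_id.mul continuous_const).tendsto u).eventually_lt_const
      (by simpa [mul_comm] using h)).filter_mono nhdsWithin_le_nhds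
  obtain ⟨t, ht, hut⟩ := (this.and self_mem_nhdsWithin).exists
  exact ⟨t, hut, ht⟩

lemma eventually_nonneg_add_smul {z d : ι → ℝ} (hz : ∀ j, 0 ≤ z j)
    (hd : ∀ j, z j = 0 → 0 ≤ d j) : ∀ᶠ s in 𝓝[>] (0 : ℝ), ∀ j, 0 ≤ (z + s • d) j := by
  refine eventually_all.2 fun j => ?_
  rcases (hz j).eq_or_lt with h | h
  · filter_upwards [self_mem_nhdsWithin] with s (hs : 0 < s)
    simpa [← h] using mul_nonneg hs.le (hd j h.symm)
  · filter_upwards [((tendsto_add_mul_nhds_zero (z j) (d j)).eventually_const_lt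
      h).filter_mono nhdsWithin_le_nhds] with s hs
    simpa using hs.le

variable {g : ι → ℝ → ℝ} {G : ℝ}

lemma eventually_cost_lt_of_cost_lt (hg : ∀ j, Continuous (g j)) {z : ι → ℝ} (d : ι → ℝ)
    (h : ∑ j, g j (z j) < G) : ∀ᶠ s in 𝓝[>] (0 : ℝ), ∑ j, g j ((z + s • d) j) < G := by
  have hφ : Continuous fun s : ℝ => ∑ j, g j ((z + s • d) j) := by fun_prop
  have hφ0 : Tendsto (fun s : ℝ => ∑ j, g j ((z + s • d) j)) (𝓝 0) (𝓝 (∑ j, g j (z j))) := by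
    simpa using hφ.tendsto 0
  exact (hφ0.eventually_lt_const h).filter_mono nhdsWithin_le_nhds

lemma eventually_cost_lt_of_deriv_neg (hg : ∀ j, Differentiable ℝ (g j)) {z d : ι → ℝ}
    (h : ∑ j, g j (z j) ≤ G) (hd : ∑ j, deriv (g j) (z j) * d j < 0) :
    ∀ᶠ s in 𝓝[>] (0 : ℝ), ∑ j, g j ((z + s • d) j) < G := by
  set φ : ℝ → ℝ := fun s => ∑ j, g j ((z + s • d) j)
  have hφ : HasDerivAt φ (∑ j, deriv (g j) (z j) * d j) 0 := by
    refine HasDerivAt.fun_sum fun j _ => ?_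
    have hline : HasDerivAt (fun s : ℝ => (z + s • d) j) (d j) 0 := by
      simpa using ((hasDerivAt_id (0 : ℝ)).mul_const (d j)).const_add (z j)
    simpa [Function.comp_def] using (hg j ((z + (0 : ℝ) • d) j)).hasDerivAt.comp 0 hline
  filter_upwards [hφ.hasDerivWithinAt.limsup_slope_le' Set.self_notMem_Ioi hd,
    self_mem_nhdsWithin] with s hs (hs0 : 0 < s)
  have : φ s < φ 0 := (slope_neg_iff_of_le hs0.le).1 hs
  simp only [φ, zero_smul, add_zero] at this
  linarith

end Perturbation

section Convex

variable {f : ℝ → ℝ} {S : Set ℝ} {a x y : ℝ}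

lemma ConvexOn.add_deriv_mul_sub_le (hf : ConvexOn ℝ S f) (hx : x ∈ S) (hy : y ∈ S)
    (hd : DifferentiableAt ℝ f x) : f x + deriv f x * (y - x) ≤ f y := by
  rcases lt_trichotomy x y with h | rfl | h
  · have := hf.deriv_le_slope hx hy h hd
    rw [slope_def_field, le_div_iff₀ (sub_pos.2 h)] at this
    linarith
  · simp
  · have := hf.slope_le_deriv hy hx h hd
    rw [slope_def_field, div_le_iff₀ (sub_pos.2 h)] at this
    linarith

lemma ConvexOn.deriv_pos_of_strictMonoOn (hf : ConvexOn ℝ S f) (hmono : StrictMonoOn f S)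
    (ha : a ∈ S) (hx : x ∈ S) (hax : a < x) (hd : DifferentiableAt ℝ f x) : 0 < deriv f x :=
  (hmono.slope_pos ha hx hax.ne).trans_le (hf.slope_le_deriv ha hx hax hd)

end Convex

section Sums

variable {ι : Type*} [Fintype ι]

lemma sum_mul_le_sum_mul_of_marginal_cost {g : ι → ℝ → ℝ}
    (hconv : ∀ j, ConvexOn ℝ (Set.Ici 0) (g j)) (hg : ∀ j, Differentiable ℝ (g j))
    {z w ω : ι → ℝ} {θ : ℝ} (hθ : 0 < θ) (hz : ∀ j, 0 ≤ z j) (hw : ∀ j, 0 ≤ w j)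
    (hcost : ∑ j, g j (w j) ≤ ∑ j, g j (z j)) (hω : ∀ j, θ * ω j ≤ deriv (g j) (z j))
    (hωz : ∀ j, 0 < z j → θ * ω j = deriv (g j) (z j)) :
    ∑ j, ω j * w j ≤ ∑ j, ω j * z j := by
  have hw' : θ * ∑ j, ω j * w j ≤ ∑ j, deriv (g j) (z j) * w j := by
    rw [mul_sum]
    exact sum_le_sum fun j _ => by
      rw [← mul_assoc]; exact mul_le_mul_of_nonneg_right (hω j) (hw j)
  have hz' : θ * ∑ j, ω j * z j = ∑ j, deriv (g j) (z j) * z j := by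
    rw [mul_sum]
    refine sum_congr rfl fun j _ => ?_
    rcases (hz j).eq_or_lt with h | h
    · simp [← h]
    · rw [← mul_assoc, hωz j h]
  have htangent := sum_le_sum fun j (_ : j ∈ univ) =>
    (hconv j).add_deriv_mul_sub_le (hz j) (hw j) (hg j (z j))
  simp only [sum_add_distrib, mul_sub, sum_sub_distrib] at htangent
  exact le_of_mul_le_mul_left (by linarith) hθ

lemma sum_mul_le_of_forall_ne_zero {q f : ι → ℝ} {c : ℝ} (hq0 : ∀ i, 0 ≤ q i)
    (hq1 : ∑ i, q i = 1) (hf : ∀ i, q i ≠ 0 → f i ≤ c) : ∑ i, q i * f i ≤ c := by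
  calc ∑ i, q i * f i ≤ ∑ i, q i * c := sum_le_sum fun i _ => by
        by_cases h : q i = 0
        · simp [h]
        · exact mul_le_mul_of_nonneg_left (hf i h) (hq0 i)
    _ = c := by rw [← sum_mul, hq1, one_mul]

variable [DecidableEq ι]

lemma sum_mul_sum_compl_eq (q : Finset ι → ℝ) (hq : ∑ S, q S = 1) (w : ι → ℝ) :
    ∑ S, q S * ∑ j ∈ Sᶜ, w j = ∑ j, (1 - ∑ S with j ∈ S, q S) * w j := by
  have h : ∀ j, 1 - ∑ S with j ∈ S, q S = ∑ S with j ∉ S, q S := fun j => by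
    rw [← hq, ← sum_filter_add_sum_filter_not univ (fun S => j ∈ S)]; ring
  simp_rw [h, sum_mul, mul_sum, sum_filter]
  rw [sum_comm]
  refine sum_congr rfl fun S _ => ?_
  rw [← sum_filter, ← compl_filter, filter_mem_eq_inter, univ_inter]

lemma one_sub_sum_filter_mem_eq {q : Finset ι → ℝ} {A : Finset ι} {p : ι → ℝ}
    (hsupp : ∀ S, q S ≠ 0 → S ⊆ A) (hmarg : ∀ a ∈ A, ∑ S with a ∈ S, q S = p a) (j : ι) :
    1 - ∑ S with j ∈ S, q S = if j ∈ A then 1 - p j else 1 := by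
  split_ifs with hj
  · rw [hmarg j hj]
  · rw [sub_eq_self]
    exact sum_eq_zero fun S hS => by_contra fun hq => hj (hsupp S hq (mem_filter.1 hS).2)

lemma sum_compl_le_sum_compl {z : ι → ℝ} {M : ℝ} {S T : Finset ι} (hzM : ∀ j, z j ≤ M)
    (hS : ∀ j ∈ S, z j = M) (hST : #T = #S) : ∑ j ∈ Sᶜ, z j ≤ ∑ j ∈ Tᶜ, z j := by
  have hT : ∑ j ∈ T, z j ≤ #T * M := by
    simpa using sum_le_card_nsmul T z M fun j _ => hzM j
  have := sum_eq_card_nsmul hS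
  rw [hST, ← nsmul_eq_mul] at hT
  linarith [sum_compl_add_sum S z, sum_compl_add_sum T z]

lemma sum_ite_mul_eq_of_compl_eq_union {A B C : Finset ι} (hABC : Aᶜ = B ∪ C)
    (hBC : Disjoint B C) (a w : ι → ℝ) :
    ∑ j, (if j ∈ A then a j else 1) * w j =
      ∑ j ∈ A, a j * w j + ∑ j ∈ B, w j + ∑ j ∈ C, w j := by
  rw [← sum_add_sum_compl A, hABC, sum_union hBC, add_assoc]
  congr 1
  · exact sum_congr rfl fun j hj => by rw [if_pos hj]
  · congr 1 <;> exact sum_congr rfl fun j hj => by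
      rw [if_neg (mem_compl.1 (hABC ▸ mem_union.2 (by tauto))), one_mul]

lemma compl_filter_forall_le_eq_union {z : ι → ℝ} {i₀ : ι} (hz : ∀ j, 0 ≤ z j)
    (hpos : 0 < z i₀) :
    (univ.filter fun i => ∀ j, z j ≤ z i)ᶜ =
      (univ.filter fun i => 0 < z i ∧ ∃ j, z i < z j) ∪ univ.filter fun i => z i = 0 := by
  ext i
  simp only [compl_filter, mem_filter, mem_univ, true_and, mem_union, not_forall, not_le]
  constructor
  · rintro ⟨j, hj⟩
    rcases (hz i).eq_or_lt with h | h
    · exact Or.inr h.symm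
    · exact Or.inl ⟨h, j, hj⟩
  · rintro (⟨-, hi⟩ | h)
    · exact hi
    · exact ⟨i₀, by rwa [h]⟩

end Sums

section SumSmallest

variable {J K : ℕ}

lemma le_sumSmallest (z : Fin J → ℝ) {b : ℝ}
    (h : ∀ S : Finset (Fin J), #S = J - K → b ≤ ∑ i ∈ S, z i) : b ≤ sumSmallest J K z := by
  obtain ⟨S, -, hS⟩ := exists_subset_card_eq (s := (univ : Finset (Fin J))) (n := J - K)
    (by simp)
  exact le_csInf ⟨_, S, hS, rfl⟩ fun s ⟨S, hS, hs⟩ => hs ▸ h S hS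

lemma sumSmallest_le (z : Fin J → ℝ) {S : Finset (Fin J)} (hS : #S = J - K) :
    sumSmallest J K z ≤ ∑ i ∈ S, z i := by
  refine csInf_le (Set.Finite.bddBelow ?_) ⟨S, hS, rfl⟩
  refine (Set.finite_range fun T : Finset (Fin J) => ∑ i ∈ T, z i).subset ?_
  rintro _ ⟨T, -, rfl⟩
  exact ⟨T, rfl⟩

lemma sum_sub_mul_le_sumSmallest (hKJ : K ≤ J) {z : Fin J → ℝ} {M : ℝ}
    (hzM : ∀ j, z j ≤ M) :
    ∑ j, z j - K * M ≤ sumSmallest J K z := by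
  refine le_sumSmallest z fun S hS => ?_
  have hcard : #Sᶜ = K := by rw [card_compl, hS, Fintype.card_fin]; omega
  have : ∑ i ∈ Sᶜ, z i ≤ K * M := by
    simpa [hcard] using sum_le_card_nsmul Sᶜ z M fun i _ => hzM i
  linarith [sum_compl_add_sum S z]

lemma sumSmallest_eq {z : Fin J → ℝ} {M : ℝ} {A : Finset (Fin J)} (hzM : ∀ j, z j ≤ M)
    (hA : ∀ j ∈ A, z j = M) (hK : K ≤ #A) : sumSmallest J K z = ∑ j, z j - K * M := by
  have hKJ : K ≤ J := by simpa using hK.trans (card_le_univ A)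
  obtain ⟨T, hTA, hT⟩ := exists_subset_card_eq hK
  refine le_antisymm ?_ (sum_sub_mul_le_sumSmallest hKJ hzM)
  have hTz := sum_eq_card_nsmul fun j hj => hA j (hTA hj)
  have := sumSmallest_le (K := K) z (S := Tᶜ) (by simp [card_compl, hT])
  rw [hT, nsmul_eq_mul] at hTz
  linarith [sum_compl_add_sum T z]

lemma eventually_lt_sumSmallest_add_smul (hKJ : K ≤ J) {z d : Fin J → ℝ} {M m : ℝ}
    (hzM : ∀ j, z j ≤ M) (hdm : ∀ j, z j = M → d j ≤ m) (hgain : K * m < ∑ j, d j) :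
    ∀ᶠ s in 𝓝[>] (0 : ℝ), ∑ j, z j - K * M < sumSmallest J K (z + s • d) := by
  have hbound : ∀ᶠ s in 𝓝[>] (0 : ℝ), ∀ j, (z + s • d) j ≤ M + s * m := by
    refine eventually_all.2 fun j => ?_
    rcases (hzM j).eq_or_lt with h | h
    · filter_upwards [self_mem_nhdsWithin] with s (hs : 0 < s)
      simpa [h] using mul_le_mul_of_nonneg_left (hdm j h) hs.le
    · filter_upwards [((tendsto_add_mul_nhds_zero (z j) (d j - m)).eventually_lt_const
        h).filter_mono nhdsWithin_le_nhds] with s hs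
      simp only [Pi.add_apply, Pi.smul_apply, smul_eq_mul]
      linarith
  filter_upwards [hbound, self_mem_nhdsWithin] with s hs (hs0 : 0 < s)
  have := sum_sub_mul_le_sumSmallest hKJ hs
  simp only [Pi.add_apply, Pi.smul_apply, smul_eq_mul, sum_add_distrib, ← mul_sum] at this
  nlinarith

end SumSmallest

section LeaderOpt

variable {J K : ℕ} {g : Fin J → ℝ → ℝ} {G : ℝ} {z : Fin J → ℝ} {M : ℝ} {A : Finset (Fin J)}

lemma sum_le_of_isMaxOn (hopt : IsMaxOn (sumSmallest J K) (Feasible J g G) z)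
    (hz : ∀ j, 0 ≤ z j) (hzM : ∀ j, z j ≤ M) (hA : ∀ j ∈ A, z j = M) (hK : K ≤ #A)
    {d : Fin J → ℝ} {m : ℝ} (hd : ∀ j, z j = 0 → 0 ≤ d j)
    (hcost : ∀ᶠ s in 𝓝[>] (0 : ℝ), ∑ j, g j ((z + s • d) j) ≤ G)
    (hdm : ∀ j, z j = M → d j ≤ m) : ∑ j, d j ≤ K * m := by
  by_contra! hgain
  have hKJ : K ≤ J := by simpa using hK.trans (card_le_univ A)
  obtain ⟨s, ⟨hs0, hscost⟩, hsgain⟩ := ((eventually_nonneg_add_smul hz hd).and hcost).and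
    (eventually_lt_sumSmallest_add_smul hKJ hzM hdm hgain) |>.exists
  have := isMaxOn_iff.1 hopt _ ⟨hs0, hscost⟩
  rw [sumSmallest_eq hzM hA hK] at this
  linarith

lemma cost_eq_of_isMaxOn (hKJ : K < J) (hg : ∀ j, Continuous (g j))
    (hopt : IsMaxOn (sumSmallest J K) (Feasible J g G) z) (hz : z ∈ Feasible J g G)
    (hzM : ∀ j, z j ≤ M) (hA : ∀ j ∈ A, z j = M) (hK : K ≤ #A) : ∑ j, g j (z j) = G := by
  refine hz.2.antisymm (not_lt.1 fun hlt => ?_)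
  have := sum_le_of_isMaxOn hopt hz.1 hzM hA hK (d := 1) (m := 1) (fun _ _ => zero_le_one)
    ((eventually_cost_lt_of_cost_lt hg 1 hlt).mono fun _ => le_of_lt) fun _ _ => le_rfl
  have : (J : ℝ) ≤ K := by simpa using this
  exact hKJ.not_ge (by exact_mod_cast this)

lemma mul_deriv_sub_nonpos_of_isMaxOn (hg : ∀ j, Differentiable ℝ (g j))
    (hopt : IsMaxOn (sumSmallest J K) (Feasible J g G) z) (hz : z ∈ Feasible J g G)
    (hzM : ∀ j, z j ≤ M) (hM : 0 < M) (hA : ∀ j, j ∈ A ↔ z j = M) (hAK : K < #A) {θ : ℝ}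
    (hθ : ∑ j ∈ A, deriv (g j) (z j) = θ * (#A - K)) {b : Fin J} (hb : z b < M) {σ : ℝ}
    (hσ : 0 < z b ∨ σ < 0) : σ * (deriv (g b) (z b) - θ) ≤ 0 := by
  by_contra! hpos
  set γ := deriv (g b) (z b)
  have hn : (0 : ℝ) < #A - K := sub_pos.2 (by exact_mod_cast hAK)
  obtain ⟨t, hut, htγ⟩ :=
    exists_gt_and_mul_lt (u := -σ * (#A - K)) (γ := γ) (θ := θ) (by nlinarith)
  have hbA : b ∉ A := fun h => hb.ne ((hA b).1 h)
  -- Rate `σ` on all of `A` and `t` on `b`: by the choice of `t`, `∑ d` exceeds `K * σ`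
  -- while the cost decreases to first order.
  set d : Fin J → ℝ := fun j => (if j ∈ A then σ else 0) + if j = b then t else 0
  have hsum : ∑ j, d j = σ * #A + t := by
    simp [d, sum_add_distrib, sum_ite_mem, mul_comm]
  have hcost : ∑ j, deriv (g j) (z j) * d j = σ * (θ * (#A - K)) + t * γ := by
    simp [d, mul_add, sum_add_distrib, ← hθ, mul_sum, mul_comm, γ]
  have hd : ∀ j, z j = 0 → 0 ≤ d j := by
    intro j hj
    have hjA : j ∉ A := fun h => hM.ne' (((hA j).1 h).symm.trans hj)
    by_cases hjb : j = b
    · subst hjb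
      have hσ : σ < 0 := hσ.resolve_left (by simp [hj])
      simp only [d, if_neg hjA, if_true, zero_add]
      nlinarith
    · simp [d, hjA, hjb]
  have hdm : ∀ j, z j = M → d j ≤ σ := fun j hj => by
    have hjb : j ≠ b := fun h => hbA (h ▸ (hA j).2 hj)
    simp [d, (hA j).2 hj, hjb]
  have := sum_le_of_isMaxOn hopt hz.1 hzM (fun j hj => (hA j).1 hj) hAK.le hd
    ((eventually_cost_lt_of_deriv_neg hg hz.2 (by rw [hcost]; linarith)).mono fun _ => le_of_lt)
    hdm
  nlinarith

lemma pos_of_cost_eq (hzero : ∀ j, g j 0 = 0) (hG : 0 < G) (hz : ∀ j, 0 ≤ z j)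
    (hzM : ∀ j, z j ≤ M) (hcost : ∑ j, g j (z j) = G) : 0 < M := by
  by_contra! hM
  have hz0 : z = 0 := funext fun j => ((hzM j).trans hM).antisymm (hz j)
  simp [hz0, hzero] at hcost
  linarith

lemma kkt_of_isMaxOn (hg : ∀ j, Differentiable ℝ (g j))
    (hopt : IsMaxOn (sumSmallest J K) (Feasible J g G) z) (hz : z ∈ Feasible J g G)
    (hzM : ∀ j, z j ≤ M) (hM : 0 < M) (hA : ∀ j, j ∈ A ↔ z j = M) (hAK : K < #A) {θ : ℝ}
    (hθ : ∑ j ∈ A, deriv (g j) (z j) = θ * (#A - K)) {p : Fin J → ℝ}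
    (hp : ∀ a ∈ A, θ * (1 - p a) = deriv (g a) (z a)) (j : Fin J) :
    θ * (if j ∈ A then 1 - p j else 1) ≤ deriv (g j) (z j) ∧
      (0 < z j → θ * (if j ∈ A then 1 - p j else 1) = deriv (g j) (z j)) := by
  by_cases hj : j ∈ A
  · simp only [hj, if_true, hp j hj, le_refl, implies_true, and_self]
  · have hjM : z j < M := (hzM j).lt_of_ne (mt (hA j).2 hj)
    have hkkt := fun σ =>
      mul_deriv_sub_nonpos_of_isMaxOn hg hopt hz hzM hM hA hAK hθ hjM (σ := σ)
    have hlow := hkkt (-1) (Or.inr neg_one_lt_zero)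
    simp only [hj, if_false, mul_one]
    exact ⟨by linarith, fun h => by linarith [hkkt 1 (Or.inl h)]⟩

end LeaderOpt

theorem stmt9_general (J K : ℕ) (g : Fin J → ℝ → ℝ) (G : ℝ)
    (hK : K < J) (hG : 0 < G)
    (hconv : ∀ j, StrictConvexOn ℝ (Set.Ici 0) (g j))
    (hdiff : ∀ j, Differentiable ℝ (g j))
    (hmono : ∀ j, StrictMonoOn (g j) (Set.Ici (0 : ℝ)))
    (hzero : ∀ j, g j 0 = 0)
    (z : Fin J → ℝ)
    (A B C : Finset (Fin J)) (θ : ℝ) (p : Fin J → ℝ) (q : Finset (Fin J) → ℝ)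
    (hA : A = Finset.univ.filter fun i => ∀ j, z j ≤ z i)
    (hB : B = Finset.univ.filter fun i => 0 < z i ∧ ∃ j, z i < z j)
    (hC : C = Finset.univ.filter fun i => z i = 0)
    (hAK : K < A.card)
    (hθ : θ = (∑ j ∈ A, deriv (g j) (z j)) / ((A.card : ℝ) - K))
    (hfeas : z ∈ Feasible J g G)
    (hmax : ∀ w ∈ Feasible J g G, sumSmallest J K w ≤ sumSmallest J K z)
    (hp : ∀ a, p a = 1 - deriv (g a) (z a) / θ)
    (hq0 : ∀ S, 0 ≤ q S)
    (hqsupp : ∀ S, q S ≠ 0 → S.card = K ∧ S ⊆ A)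
    (hq1 : ∑ S : Finset (Fin J), q S = 1)
    (hqmarg : ∀ a ∈ A,
      ∑ S ∈ Finset.univ.filter (fun S : Finset (Fin J) => a ∈ S), q S = p a) :
    -- z* is a best response to q*: it maximizes the expected number of
    -- successfully stuffed votes
    (∀ w ∈ Feasible J g G,
      ∑ a ∈ A, (1 - p a) * w a + ∑ b ∈ B, w b + ∑ c ∈ C, w c ≤
      ∑ a ∈ A, (1 - p a) * z a + ∑ b ∈ B, z b + ∑ c ∈ C, z c) ∧
    -- Nash equilibrium: no unilateral deviation of P₁
    (∀ w ∈ Feasible J g G,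
      ∑ S : Finset (Fin J), q S * ∑ j ∈ Sᶜ, w j ≤
      ∑ S : Finset (Fin J), q S * ∑ j ∈ Sᶜ, z j) ∧
    -- no unilateral deviation of P_A (who minimizes)
    (∀ T : Finset (Fin J), T.card = K →
      ∑ S : Finset (Fin J), q S * ∑ j ∈ Sᶜ, z j ≤ ∑ j ∈ Tᶜ, z j) := by
  obtain ⟨a₀, ha₀⟩ : A.Nonempty := card_pos.1 (K.zero_le.trans_lt hAK)
  set M := z a₀
  have hzM : ∀ j, z j ≤ M := by simpa [hA] using ha₀
  have hAM : ∀ j, j ∈ A ↔ z j = M := fun j => by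
    simpa [hA] using ⟨fun h => (hzM j).antisymm (h a₀), fun h k => h ▸ hzM k⟩
  have hopt : IsMaxOn (sumSmallest J K) (Feasible J g G) z := isMaxOn_iff.2 hmax
  have hcost := cost_eq_of_isMaxOn hK (fun j => (hdiff j).continuous) hopt hfeas hzM
    (fun j => (hAM j).1) hAK.le
  have hM := pos_of_cost_eq hzero hG hfeas.1 hzM hcost
  have hn : (0 : ℝ) < #A - K := sub_pos.2 (by exact_mod_cast hAK)
  have hderiv : ∀ a ∈ A, 0 < deriv (g a) (z a) := fun a ha =>
    (hconv a).convexOn.deriv_pos_of_strictMonoOn (hmono a) Set.self_mem_Ici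
      ((hAM a).1 ha ▸ hM.le) ((hAM a).1 ha ▸ hM) (hdiff a _)
  have hθpos : 0 < θ := hθ ▸ div_pos (sum_pos hderiv ⟨a₀, ha₀⟩) hn
  have hkkt := kkt_of_isMaxOn hdiff hopt hfeas hzM hM hAM hAK (θ := θ) (p := p)
    (by rw [hθ, div_mul_cancel₀ _ hn.ne'])
    fun a _ => by rw [hp, sub_sub_cancel, mul_div_cancel₀ _ hθpos.ne']
  have hbest : ∀ w ∈ Feasible J g G, ∑ j, (if j ∈ A then 1 - p j else 1) * w j ≤
      ∑ j, (if j ∈ A then 1 - p j else 1) * z j := fun w hw =>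
    sum_mul_le_sum_mul_of_marginal_cost (fun j => (hconv j).convexOn) hdiff hθpos hfeas.1 hw.1
      (hcost ▸ hw.2) (fun j => (hkkt j).1) fun j => (hkkt j).2
  have habc := sum_ite_mul_eq_of_compl_eq_union (A := A) (B := B) (C := C)
    -- `convert` only reconciles the `Decidable` instances of the filters over `Fin J`
    (by rw [hA, hB, hC]; convert compl_filter_forall_le_eq_union hfeas.1 hM)
    (by rw [hB, hC]; exact disjoint_filter.2 fun j _ h h' => h.1.ne' h') (fun j => 1 - p j)
  refine ⟨fun w hw => ?_, fun w hw => ?_, fun T hT => ?_⟩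
  · simpa only [habc] using hbest w hw
  · simpa only [sum_mul_sum_compl_eq q hq1,
      one_sub_sum_filter_mem_eq (fun S hS => (hqsupp S hS).2) hqmarg] using hbest w hw
  · exact sum_mul_le_of_forall_ne_zero hq0 hq1 fun S hS => sum_compl_le_sum_compl hzM
      (fun j hj => (hAM j).1 ((hqsupp S hS).2 hj)) (by rw [hT, (hqsupp S hS).1])

/-- `(z*, q*)` is a Nash equilibrium: `z*` maximizes the expected number of
successfully stuffed votes against the mixed strategy `q*` of the inspector,
and `q*` is a best response to `z*`. -/
theorem stmt9 (J K : ℕ) (g : Fin J → ℝ → ℝ) (G : ℝ)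
    (hK0 : 0 < K) (hK : K < J) (hG : 0 < G)
    (hconv : ∀ j, StrictConvexOn ℝ (Set.Ici 0) (g j))
    (hdiff : ∀ j, Differentiable ℝ (g j))
    (hmono : ∀ j, StrictMonoOn (g j) (Set.Ici (0 : ℝ)))
    (hzero : ∀ j, g j 0 = 0)
    (z : Fin J → ℝ)
    (A B C : Finset (Fin J)) (θ : ℝ) (p : Fin J → ℝ) (q : Finset (Fin J) → ℝ)
    (hA : A = Finset.univ.filter fun i => ∀ j, z j ≤ z i)
    (hB : B = Finset.univ.filter fun i => 0 < z i ∧ ∃ j, z i < z j)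
    (hC : C = Finset.univ.filter fun i => z i = 0)
    (hAK : K < A.card)
    (hθ : θ = (∑ j ∈ A, deriv (g j) (z j)) / ((A.card : ℝ) - K))
    (hfeas : z ∈ Feasible J g G)
    (hmax : ∀ w ∈ Feasible J g G, sumSmallest J K w ≤ sumSmallest J K z)
    (hp : ∀ a, p a = 1 - deriv (g a) (z a) / θ)
    (hq0 : ∀ S, 0 ≤ q S)
    (hqsupp : ∀ S, q S ≠ 0 → S.card = K ∧ S ⊆ A)
    (hq1 : ∑ S : Finset (Fin J), q S = 1)
    (hqmarg : ∀ a ∈ A,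
      ∑ S ∈ Finset.univ.filter (fun S : Finset (Fin J) => a ∈ S), q S = p a) :
    -- z* is a best response to q*: it maximizes the expected number of
    -- successfully stuffed votes
    (∀ w ∈ Feasible J g G,
      ∑ a ∈ A, (1 - p a) * w a + ∑ b ∈ B, w b + ∑ c ∈ C, w c ≤
      ∑ a ∈ A, (1 - p a) * z a + ∑ b ∈ B, z b + ∑ c ∈ C, z c) ∧
    -- Nash equilibrium: no unilateral deviation of P₁
    (∀ w ∈ Feasible J g G,
      ∑ S : Finset (Fin J), q S * ∑ j ∈ Sᶜ, w j ≤
      ∑ S : Finset (Fin J), q S * ∑ j ∈ Sᶜ, z j) ∧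
    -- no unilateral deviation of P_A (who minimizes)
    (∀ T : Finset (Fin J), T.card = K →
      ∑ S : Finset (Fin J), q S * ∑ j ∈ Sᶜ, z j ≤ ∑ j ∈ Tᶜ, z j) :=
  stmt9_general J K g G hK hG hconv hdiff hmono hzero z A B C θ p q hA hB hC hAK hθ hfeas hmax hp
    hq0 hqsupp hq1 hqmarg
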